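/- (Proposition 2, case 3) Assume J₁₁ < 0 and 0 < J₁₂ < |J₁₁| (so both eigenvalues J₁₁ + J₁₂ and J₁₁ − J₁₂ are negative). Then for every β > 0, the origin (0,0) is the unique critical point of f in (−1,1)², and it is a local maximum point of f. -/

import Mathlib

/-!
At a critical point `(x, y)` the stationarity equations read
`β (J₁₁ x + J₁₂ y) = log (1 + x) - log (1 - x)`, and symmetrically in `y`.
Multiplying by `x`, resp. `y`, and adding gives
`β Q(x, y) = x (log (1 + x) - log (1 - x)) + y (log (1 + y) - log (1 - y)) ≥ 0`
for `Q(x, y) = J₁₁ (x² + y²) + 2 J₁₂ x y ≤ (J₁₁ + |J₁₂|)(x² + y²)`, which is negative definite;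
hence `x = y = 0`. The origin is a local maximum because `f ≤ β Q / 8 ≤ 0 = f(0, 0)` on
`[-1, 1]²`, where the entropy `𝓘` is nonnegative (`t log t ≥ t - 1`).
-/

/-- The entropy function 𝓘(x) = ((1+x)log(1+x) + (1-x)log(1-x))/2.
Note `Real.log 0 = 0` in Mathlib, which implements the convention 0·log 0 = 0. -/
noncomputable def entI (x : ℝ) : ℝ :=
  ((1 + x) * Real.log (1 + x) + (1 - x) * Real.log (1 - x)) / 2

/-- Pressure functional of the symmetric zero-field bipartite mean-field model
(α₁ = α₂ = 1/2, J₁₁ = J₂₂, h₁ = h₂ = 0). -/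
noncomputable def fSym (β J11 J12 : ℝ) (μ : ℝ × ℝ) : ℝ :=
  β / 8 * (J11 * (μ.1 ^ 2 + μ.2 ^ 2) + 2 * J12 * μ.1 * μ.2) - (entI μ.1 + entI μ.2) / 2

/-- A critical point of f: a point of the open square (−1,1)² where both partial
derivatives of f vanish. -/
def IsCritPt (β J11 J12 : ℝ) (μ : ℝ × ℝ) : Prop :=
  μ.1 ∈ Set.Ioo (-1 : ℝ) 1 ∧ μ.2 ∈ Set.Ioo (-1 : ℝ) 1 ∧
    deriv (fun x => fSym β J11 J12 (x, μ.2)) μ.1 = 0 ∧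
    deriv (fun y => fSym β J11 J12 (μ.1, y)) μ.2 = 0

open Real Set

lemma sub_mul_log_sub_log_nonneg {a b : ℝ} (ha : 0 < a) (hb : 0 < b) :
    0 ≤ (a - b) * (log a - log b) := by
  rcases le_total a b with hab | hab
  · exact mul_nonneg_of_nonpos_of_nonpos (by linarith) (by linarith [log_le_log ha hab])
  · exact mul_nonneg (by linarith) (by linarith [log_le_log hb hab])

lemma quadForm_le_mul_sum_sq (J11 J12 x y : ℝ) :
    J11 * (x ^ 2 + y ^ 2) + 2 * J12 * x * y ≤ (J11 + |J12|) * (x ^ 2 + y ^ 2) := by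
  have hxy : 2 * |x * y| ≤ x ^ 2 + y ^ 2 := by
    simpa [abs_mul, sq_abs, mul_assoc] using two_mul_le_add_sq |x| |y|
  have hJ : J12 * (x * y) ≤ |J12| * |x * y| := by
    simpa [abs_mul] using le_abs_self (J12 * (x * y))
  nlinarith [abs_nonneg J12]

lemma entI_nonneg {x : ℝ} (hx : x ∈ Icc (-1 : ℝ) 1) : 0 ≤ entI x := by
  have h1 := self_sub_one_le_mul_log (x := 1 + x) (by linarith [hx.1])
  have h2 := self_sub_one_le_mul_log (x := 1 - x) (by linarith [hx.2])
  unfold entI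
  linarith

lemma hasDerivAt_entI {x : ℝ} (hx : x ∈ Ioo (-1 : ℝ) 1) :
    HasDerivAt entI ((log (1 + x) - log (1 - x)) / 2) x := by
  have h1 : 1 + x ≠ 0 := by linarith [hx.1]
  have h2 : 1 - x ≠ 0 := by linarith [hx.2]
  have hA := ((hasDerivAt_id x).const_add 1).mul (((hasDerivAt_id x).const_add 1).log h1)
  have hB := ((hasDerivAt_id x).const_sub 1).mul (((hasDerivAt_id x).const_sub 1).log h2)
  refine ((hA.add hB).div_const 2).congr_deriv ?_
  simp only [id]
  field_simp
  ring

lemma fSym_swap (β J11 J12 x y : ℝ) : fSym β J11 J12 (x, y) = fSym β J11 J12 (y, x) := by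
  simp only [fSym]
  ring

lemma hasDerivAt_fSym_fst (β J11 J12 y : ℝ) {x : ℝ} (hx : x ∈ Ioo (-1 : ℝ) 1) :
    HasDerivAt (fun x => fSym β J11 J12 (x, y))
      (β / 4 * (J11 * x + J12 * y) - (log (1 + x) - log (1 - x)) / 4) x := by
  have hQ : HasDerivAt (fun x => J11 * (x ^ 2 + y ^ 2) + 2 * J12 * x * y)
      (J11 * (2 * x) + 2 * J12 * y) x := by
    have := (((hasDerivAt_pow 2 x).add_const (y ^ 2)).const_mul J11).add
      (((hasDerivAt_id x).const_mul (2 * J12)).mul_const y)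
    exact this.congr_deriv (by simp)
  refine ((hQ.const_mul (β / 8)).sub
    (((hasDerivAt_entI hx).add_const (entI y)).div_const 2)).congr_deriv ?_
  ring

lemma hasDerivAt_fSym_snd (β J11 J12 x : ℝ) {y : ℝ} (hy : y ∈ Ioo (-1 : ℝ) 1) :
    HasDerivAt (fun y => fSym β J11 J12 (x, y))
      (β / 4 * (J11 * y + J12 * x) - (log (1 + y) - log (1 - y)) / 4) y := by
  simpa only [fSym_swap β J11 J12 x] using hasDerivAt_fSym_fst β J11 J12 x hy

lemma isCritPt_iff (β J11 J12 x y : ℝ) :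
    IsCritPt β J11 J12 (x, y) ↔ x ∈ Ioo (-1 : ℝ) 1 ∧ y ∈ Ioo (-1 : ℝ) 1 ∧
      β * (J11 * x + J12 * y) = log (1 + x) - log (1 - x) ∧
        β * (J11 * y + J12 * x) = log (1 + y) - log (1 - y) := by
  refine and_congr_right fun hx => and_congr_right fun hy => ?_
  rw [(hasDerivAt_fSym_fst β J11 J12 y hx).deriv, (hasDerivAt_fSym_snd β J11 J12 x hy).deriv]
  constructor <;> rintro ⟨h1, h2⟩ <;> constructor <;> linarith

lemma eq_zero_of_isCritPt {β J11 J12 : ℝ} (hβ : 0 < β) (hJ : |J12| < -J11) {μ : ℝ × ℝ}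
    (hμ : IsCritPt β J11 J12 μ) : μ = (0, 0) := by
  obtain ⟨x, y⟩ := μ
  obtain ⟨hx, hy, ex, ey⟩ := (isCritPt_iff β J11 J12 x y).1 hμ
  have sx := sub_mul_log_sub_log_nonneg (a := 1 + x) (b := 1 - x)
    (by linarith [hx.1]) (by linarith [hx.2])
  have sy := sub_mul_log_sub_log_nonneg (a := 1 + y) (b := 1 - y)
    (by linarith [hy.1]) (by linarith [hy.2])
  rw [← ex] at sx
  rw [← ey] at sy
  have hQ : 0 ≤ β * ((J11 + |J12|) * (x ^ 2 + y ^ 2)) :=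
    calc 0 ≤ β * (J11 * (x ^ 2 + y ^ 2) + 2 * J12 * x * y) := by nlinarith
      _ ≤ β * ((J11 + |J12|) * (x ^ 2 + y ^ 2)) := by
        gcongr; exact quadForm_le_mul_sum_sq J11 J12 x y
  have hsq : x ^ 2 + y ^ 2 ≤ 0 := by
    by_contra! h
    nlinarith [mul_pos hβ (mul_pos (by linarith : 0 < -(J11 + |J12|)) h)]
  have hx0 : x = 0 := by nlinarith [sq_nonneg x, sq_nonneg y]
  have hy0 : y = 0 := by nlinarith [sq_nonneg x, sq_nonneg y]
  simp [hx0, hy0]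

lemma isCritPt_zero (β J11 J12 : ℝ) : IsCritPt β J11 J12 (0, 0) :=
  (isCritPt_iff β J11 J12 0 0).2 ⟨by norm_num, by norm_num, by simp, by simp⟩

lemma fSym_le_zero {β J11 J12 x y : ℝ} (hβ : 0 ≤ β) (hJ : |J12| ≤ -J11)
    (hx : x ∈ Icc (-1 : ℝ) 1) (hy : y ∈ Icc (-1 : ℝ) 1) : fSym β J11 J12 (x, y) ≤ 0 := by
  have hQ : J11 * (x ^ 2 + y ^ 2) + 2 * J12 * x * y ≤ 0 :=
    (quadForm_le_mul_sum_sq J11 J12 x y).trans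
      (mul_nonpos_of_nonpos_of_nonneg (by linarith) (by positivity))
  have := mul_nonpos_of_nonneg_of_nonpos (by positivity : 0 ≤ β / 8) hQ
  simp only [fSym]
  linarith [entI_nonneg hx, entI_nonneg hy]

lemma isLocalMax_fSym_zero {β J11 J12 : ℝ} (hβ : 0 ≤ β) (hJ : |J12| ≤ -J11) :
    IsLocalMax (fSym β J11 J12) (0, 0) := by
  have hsq : Icc (-1 : ℝ) 1 ×ˢ Icc (-1 : ℝ) 1 ∈ nhds ((0 : ℝ), (0 : ℝ)) :=
    prod_mem_nhds (Icc_mem_nhds (by norm_num) (by norm_num))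
      (Icc_mem_nhds (by norm_num) (by norm_num))
  filter_upwards [hsq] with ⟨x, y⟩ ⟨hx, hy⟩
  calc fSym β J11 J12 (x, y) ≤ 0 := fSym_le_zero hβ hJ hx hy
    _ = fSym β J11 J12 (0, 0) := by simp [fSym, entI]

/-- Proposition 2, case 3: for J₁₁ < 0 and 0 < J₁₂ < |J₁₁| (both eigenvalues negative),
for every β > 0 the origin is the unique critical point of f and a local maximum
point. -/
theorem prop2_case3 (β J11 J12 : ℝ) (hJ11 : J11 < 0) (hJ12 : 0 < J12)
    (hJ12' : J12 < |J11|) (hβ0 : 0 < β) :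
    (∀ μ : ℝ × ℝ, IsCritPt β J11 J12 μ ↔ μ = (0, 0)) ∧
      IsLocalMax (fSym β J11 J12) (0, 0) := by
  have hJ : |J12| < -J11 := by rwa [abs_of_pos hJ12, ← abs_of_neg hJ11]
  refine ⟨fun μ => ⟨eq_zero_of_isCritPt hβ0 hJ, ?_⟩, isLocalMax_fSym_zero hβ0.le hJ.le⟩
  rintro rfl
  exact isCritPt_zero β J11 J12
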